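/- arXiv:1404.6928 — 2 statements merged into one kernel-verified Lean document; each statement's English description precedes it below -/
import Mathlib

section
/- For every integer n ≥ 2 and every x ∈ [0,1], the inequality 2n(n−1)·∫_{max(2x−1,0)}^{x} y^(n−2)·((1+y)/2 − x) dy ≤ ((n−1)/n)^(n−1) holds. -/
open Set

/-! On `[a, x]` the factor `(1 + y) / 2 - x` is at most `(1 - x) / 2`, so for any lower limit
`0 ≤ a ≤ x` the left side is at most `n x ^ (n - 1) (1 - x)`, whose maximum over `[0, 1]`, attained
at `x = (n - 1) / n`, is `((n - 1) / n) ^ (n - 1)` by AM-GM. -/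

theorem pow_mul_sub_le_pow_succ {a b : ℝ} (ha : 0 ≤ a) (hb : 0 ≤ b) (k : ℕ) :
    a ^ k * ((k + 1) * b - k * a) ≤ b ^ (k + 1) := by
  induction k with
  | zero => simp
  | succ k ih =>
    have hstep : a * ((k + 2) * b - (k + 1) * a) ≤ b * ((k + 1) * b - k * a) := by
      linarith [mul_nonneg (k.cast_nonneg (α := ℝ)) (sq_nonneg (a - b)), sq_nonneg (a - b)]
    calc a ^ (k + 1) * ((((k + 1 : ℕ) : ℝ) + 1) * b - (k + 1 : ℕ) * a)
        = a ^ k * (a * ((k + 2) * b - (k + 1) * a)) := by push_cast; ring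
      _ ≤ a ^ k * (b * ((k + 1) * b - k * a)) := by gcongr
      _ = b * (a ^ k * ((k + 1) * b - k * a)) := by ring
      _ ≤ b * b ^ (k + 1) := by gcongr
      _ = b ^ (k + 1 + 1) := by ring

theorem succ_mul_pow_mul_one_sub_le {x : ℝ} (hx : 0 ≤ x) (k : ℕ) :
    (k + 1) * x ^ k * (1 - x) ≤ (k / (k + 1)) ^ k := by
  rcases k.eq_zero_or_pos with rfl | hk
  · simpa using hx
  set c : ℝ := k / (k + 1)
  have hc : 0 < c := by positivity
  have hkc : (k + 1) * c = k := mul_div_cancel₀ _ (by positivity)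
  clear_value c
  refine le_of_mul_le_mul_left ?_ hc
  calc c * ((k + 1) * x ^ k * (1 - x)) = x ^ k * ((k + 1) * c - k * x) := by
        linear_combination (-x ^ (k + 1)) * hkc
    _ ≤ c ^ (k + 1) := pow_mul_sub_le_pow_succ hx hc.le k
    _ = c * c ^ k := pow_succ' c k

theorem integral_pow_mul_sub_le (m : ℕ) {a x : ℝ} (ha : 0 ≤ a) (hax : a ≤ x) (hx : x ≤ 1) :
    ∫ y in a..x, y ^ m * ((1 + y) / 2 - x) ≤ (1 - x) * x ^ (m + 1) / (2 * (m + 1)) := by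
  calc _ ≤ ∫ y in a..x, (1 - x) / 2 * y ^ m := by
        refine intervalIntegral.integral_mono_on hax
          ((by fun_prop : Continuous _).intervalIntegrable _ _)
          ((by fun_prop : Continuous _).intervalIntegrable _ _) fun y hy => ?_
        have hy0 : 0 ≤ y ^ m := pow_nonneg (ha.trans hy.1) m
        nlinarith [hy.2]
    _ = (1 - x) / 2 * ((x ^ (m + 1) - a ^ (m + 1)) / (m + 1)) := by
        rw [intervalIntegral.integral_const_mul, integral_pow]
    _ ≤ (1 - x) / 2 * (x ^ (m + 1) / (m + 1)) := by
        have : 0 ≤ a ^ (m + 1) := pow_nonneg ha _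
        gcongr
        linarith
    _ = (1 - x) * x ^ (m + 1) / (2 * (m + 1)) := by field_simp

theorem stmt_7 (n : ℕ) (hn : 2 ≤ n) (x : ℝ) (hx : x ∈ Icc (0:ℝ) 1) :
    2 * (n:ℝ) * ((n:ℝ) - 1) *
        (∫ y in (max (2*x - 1) 0)..x, y ^ (n-2) * ((1 + y)/2 - x))
      ≤ (((n:ℝ) - 1) / n) ^ (n-1) := by
  obtain ⟨hx0, hx1⟩ := hx
  obtain ⟨m, rfl⟩ : ∃ m, n = m + 2 := ⟨n - 2, by omega⟩
  simp only [Nat.add_sub_cancel, show m + 2 - 1 = m + 1 by omega]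
  have hbound := integral_pow_mul_sub_le m (le_max_right (2 * x - 1) 0)
    (max_le (by linarith) hx0) hx1
  push_cast
  calc _ ≤ 2 * ((m : ℝ) + 2) * (m + 1) * ((1 - x) * x ^ (m + 1) / (2 * (m + 1))) := by
        rw [show (m : ℝ) + 2 - 1 = m + 1 by ring]
        gcongr
    _ = ((m + 1 : ℕ) + 1) * x ^ (m + 1) * (1 - x) := by push_cast; field_simp; ring
    _ ≤ (((m + 1 : ℕ) : ℝ) / ((m + 1 : ℕ) + 1)) ^ (m + 1) := succ_mul_pow_mul_one_sub_le hx0 _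
    _ = (((m : ℝ) + 2 - 1) / (m + 2)) ^ (m + 1) := by push_cast; ring_nf
end

section
/- Let n ≥ 3 be an integer and let t⁺ denote max(t,0). Define F_A(x) = 2·x^n + n·x^(n−1)·(1−x) − ((2x−1)⁺)^n − n·((2x−1)⁺)^(n−1)·(1−x), and define the operator Ω on bounded measurable functions F : [0,1] → ℝ by ΩF(x) = F_A(x) − ∫_{max(2x−1,0)}^{x} ∫₀^{(1+y)/2 − x} 2n(n−1)·y^(n−2)·F(z) dz dy − ∫_{max( max(x−1/4,0), 2x−1 )}^{x} ∫₀^{min( 1/4 + y − x, (1+y)/2 − x )} 2n(n−1)·((3y − 2x − 2z)⁺)^(n−2)·F(z) dz dy + ∫_{max(1/2, 2x−1)}^{max(1/2, x)} ∫₀^{(1+y)/2 − x} 4n(n−1)·(2y−1)^(n−2)·F(z) dz dy. Then Ω is a contraction in the supremum norm with contraction constant at most 11/12: for all bounded measurable F₁, F₂ : [0,1] → ℝ and all x ∈ [0,1], |ΩF₁(x) − ΩF₂(x)| ≤ (11/12) · sup_{z ∈ [0,1]} |F₁(z) − F₂(z)|. -/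
/-!
Each of the three double integrals in `Ω F x` is linear in `F` with a kernel that is nonnegative
on its domain of integration, and `F_A` cancels in `Ω F₁ x - Ω F₂ x`. Hence
`|Ω F₁ x - Ω F₂ x|` is at most `sup |F₁ - F₂|` times the sum of the total masses of the three
kernels, and these masses are at most `3/8`, `1/3` and `3/16`, with `3/8 + 1/3 + 3/16 = 43/48`.

The first mass has an explicit antiderivative for `x ≤ 1/2`; for `x ≥ 1/2` it is at most
`n (n - 1) x^(n-2) (1 - x)^2 / 2`, and `n (n - 1) t^(n-2) (1 - t)^2 ≤ 3/4` on `[1/2, 1]` by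
weighted AM-GM. Integrating the second kernel in `z` leaves at most `n ((3y - 2x)⁺)^(n-1)`, whose
integral is at most `x^n / 3`. The substitution `s = 2y - 1` makes the third mass half the first
one at `2x - 1`.
-/

open Set MeasureTheory intervalIntegral

theorem nat_mul_pow_mul_one_sub_le (m : ℕ) {t : ℝ} (h0 : 0 ≤ t) (h1 : t ≤ 1) :
    m * t ^ m * (1 - t) ≤ 1 - t ^ m := by
  induction m with
  | zero => simp
  | succ k ih =>
    have hk : t ^ k ≤ 1 := pow_le_one₀ h0 h1
    push_cast
    rw [pow_succ]
    nlinarith [mul_nonneg (pow_nonneg h0 k) (sub_nonneg.2 h1),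
      mul_nonneg (mul_nonneg k.cast_nonneg (pow_nonneg h0 k)) (sub_nonneg.2 h1)]

theorem two_mul_pow_mul_one_sub_add_pow_le {m : ℕ} (hm : 1 ≤ m) {t : ℝ} (h0 : 0 ≤ t)
    (h1 : t ≤ 1) :
    2 * (m + 2) * t ^ (m + 1) * (1 - t) + (m + 1) * t ^ (m + 2) ≤ m + 1 := by
  have hbern := nat_mul_pow_mul_one_sub_le (m + 1) h0 h1
  have hm3 : (m + 3 : ℝ) ≤ (m + 1) * (m + 1) := by
    have : (1 : ℝ) ≤ m := by exact_mod_cast hm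
    nlinarith
  have hw : 0 ≤ t ^ (m + 1) * (1 - t) := mul_nonneg (pow_nonneg h0 _) (by linarith)
  push_cast at hbern
  calc 2 * (m + 2) * t ^ (m + 1) * (1 - t) + (m + 1) * t ^ (m + 2)
      = (m + 3) * (t ^ (m + 1) * (1 - t)) + (m + 1) * t ^ (m + 1) := by ring
    _ ≤ (m + 1) * ((m + 1) * t ^ (m + 1) * (1 - t)) + (m + 1) * t ^ (m + 1) := by
        nlinarith [mul_le_mul_of_nonneg_right hm3 hw]
    _ ≤ (m + 1) * (1 - t ^ (m + 1)) + (m + 1) * t ^ (m + 1) := by gcongr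
    _ = m + 1 := by ring

theorem mul_pow_mul_one_sub_two_mul_add_pow_le {m : ℕ} (hm : 1 ≤ m) {s : ℝ} (h0 : 0 ≤ s)
    (h1 : s ≤ 1 / 2) :
    (m + 2) * s ^ (m + 1) * (1 - 2 * s) + (m + 1) * s ^ (m + 2) ≤ 1 / 4 := by
  have key := two_mul_pow_mul_one_sub_add_pow_le hm (t := 2 * s) (by linarith) (by linarith)
  have hpow : (m + 1 : ℝ) ≤ 2 ^ m := by exact_mod_cast Nat.lt_two_pow_self
  have hscale : 2 * (m + 2) * (2 * s) ^ (m + 1) * (1 - 2 * s) + (m + 1) * (2 * s) ^ (m + 2)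
      = 2 ^ m * 4 * ((m + 2) * s ^ (m + 1) * (1 - 2 * s) + (m + 1) * s ^ (m + 2)) := by
    ring
  have h2 : (0 : ℝ) < 2 ^ m := by positivity
  nlinarith

theorem pow_mul_pow_le_of_add_eq_one {p q : ℕ} (hp : 0 < p) (hq : 0 < q) {a b : ℝ}
    (ha : 0 ≤ a) (hb : 0 ≤ b) (hab : a + b = 1) :
    a ^ p * b ^ q * (p + q) ^ (p + q) ≤ p ^ p * q ^ q := by
  have hpR : (0 : ℝ) < p := by exact_mod_cast hp
  have hqR : (0 : ℝ) < q := by exact_mod_cast hq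
  have hs : (0 : ℝ) < p + q := by positivity
  set x := a * (p + q) / p
  set y := b * (p + q) / q
  have hx : 0 ≤ x := by positivity
  have hy : 0 ≤ y := by positivity
  have hamgm : x ^ ((p : ℝ) / (p + q)) * y ^ ((q : ℝ) / (p + q)) ≤ 1 := by
    calc _ ≤ (p : ℝ) / (p + q) * x + q / (p + q) * y :=
          Real.geom_mean_le_arith_mean2_weighted (by positivity) (by positivity) hx hy
            (by field_simp)
      _ = 1 := by simp only [x, y]; field_simp; linarith
  have hpow : (x ^ ((p : ℝ) / (p + q)) * y ^ ((q : ℝ) / (p + q))) ^ (p + q) = x ^ p * y ^ q := by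
    rw [mul_pow, ← Real.rpow_natCast, ← Real.rpow_natCast (y ^ _), ← Real.rpow_mul hx,
      ← Real.rpow_mul hy]
    push_cast
    rw [div_mul_cancel₀ _ hs.ne', div_mul_cancel₀ _ hs.ne', Real.rpow_natCast,
      Real.rpow_natCast]
  have hxy : x ^ p * y ^ q ≤ 1 :=
    hpow ▸ pow_le_one₀ (by positivity) hamgm
  have hexp : x ^ p * y ^ q * (p ^ p * q ^ q) = a ^ p * b ^ q * (p + q) ^ (p + q) := by
    simp only [x, y, div_pow, mul_pow]
    field_simp
    ring
  rw [← hexp]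
  calc x ^ p * y ^ q * (p ^ p * q ^ q) ≤ 1 * (p ^ p * q ^ q) := by gcongr
    _ = _ := one_mul _

theorem cubic_le_one_add_pow (m : ℕ) {c : ℝ} (hc : 0 ≤ c) :
    1 + m * c + m * (m - 1) / 2 * c ^ 2 + m * (m - 1) * (m - 2) / 6 * c ^ 3 ≤ (1 + c) ^ m := by
  induction m with
  | zero => norm_num
  | succ k ih =>
    have hk : (0 : ℝ) ≤ k * (k - 1) * (k - 2) := by
      match k with
      | 0 => norm_num
      | 1 => norm_num
      | k + 2 => push_cast; ring_nf; positivity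
    have hstep : 1 + (k + 1 : ℝ) * c + (k + 1) * (k + 1 - 1) / 2 * c ^ 2
        + (k + 1) * (k + 1 - 1) * (k + 1 - 2) / 6 * c ^ 3
        = (1 + k * c + k * (k - 1) / 2 * c ^ 2 + k * (k - 1) * (k - 2) / 6 * c ^ 3) * (1 + c)
          - k * (k - 1) * (k - 2) / 6 * c ^ 4 := by ring
    push_cast
    rw [hstep, pow_succ (1 + c)]
    nlinarith [mul_le_mul_of_nonneg_right ih (by linarith : (0 : ℝ) ≤ 1 + c),
      mul_nonneg hk (pow_nonneg hc 4)]

theorem sixteen_mul_pow_le_three_mul_pow {m : ℕ} (hm : 2 ≤ m) :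
    16 * (m + 1) * (m : ℝ) ^ m ≤ 3 * (m + 2) ^ (m + 1) := by
  have hmR : (2 : ℝ) ≤ m := by exact_mod_cast hm
  have hm0 : (0 : ℝ) < m := by linarith
  set D : ℝ := 1 + m * (2 / m) + m * (m - 1) / 2 * (2 / m) ^ 2
    + m * (m - 1) * (m - 2) / 6 * (2 / m) ^ 3 with hD
  have hbin : D ≤ (1 + 2 / m) ^ m := cubic_le_one_add_pow m (by positivity)
  have hcubic : 16 * (m + 1) ≤ 3 * (m + 2) * D := by
    have hdiff : 3 * (m + 2) * D - 16 * (m + 1) = (m - 2) * (3 * m - 2) * (m + 4) / m ^ 2 := by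
      rw [hD]; field_simp; ring
    have h1 : (0 : ℝ) ≤ m - 2 := by linarith
    have h2 : (0 : ℝ) ≤ 3 * m - 2 := by linarith
    have : 0 ≤ 3 * (m + 2) * D - 16 * (m + 1) := by rw [hdiff]; positivity
    linarith
  calc 16 * (m + 1) * (m : ℝ) ^ m ≤ 3 * (m + 2) * D * m ^ m := by gcongr
    _ ≤ 3 * (m + 2) * (1 + 2 / m) ^ m * m ^ m := by gcongr
    _ = 3 * (m + 2) ^ (m + 1) := by
        rw [mul_assoc, ← mul_pow, add_mul, div_mul_cancel₀ _ hm0.ne', one_mul, pow_succ]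
        ring

theorem mul_pow_mul_one_sub_sq_le {m : ℕ} (hm : 1 ≤ m) {t : ℝ} (h1 : 1 / 2 ≤ t) (h2 : t ≤ 1) :
    (m + 2) * (m + 1) * t ^ m * (1 - t) ^ 2 ≤ 3 / 4 := by
  -- `t^m (1 - t)^2` peaks at `t = m / (m + 2)`, which lies in `[1/2, 1]` only when `m ≥ 2`
  obtain rfl | hm2 := eq_or_lt_of_le hm
  · norm_num
    nlinarith [mul_nonneg (mul_nonneg (by linarith : (0 : ℝ) ≤ t - 1 / 2)
      (by linarith : (0 : ℝ) ≤ 1 - t)) (by linarith : (0 : ℝ) ≤ 1 - t),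
      mul_nonneg (by linarith : (0 : ℝ) ≤ t - 1 / 2) (by linarith : (0 : ℝ) ≤ 1 - t)]
  have hamgm := pow_mul_pow_le_of_add_eq_one (p := m) (q := 2) (by omega) (by norm_num)
    (a := t) (b := 1 - t) (by linarith) (by linarith) (by ring)
  have hnum := sixteen_mul_pow_le_three_mul_pow (m := m) hm2
  have hpos : (0 : ℝ) < (m + 2) ^ (m + 1) := by positivity
  push_cast at hamgm
  rw [← mul_le_mul_iff_of_pos_left hpos]
  calc ((m : ℝ) + 2) ^ (m + 1) * ((m + 2) * (m + 1) * t ^ m * (1 - t) ^ 2)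
      = ((m : ℝ) + 1) * (t ^ m * (1 - t) ^ 2 * (m + 2) ^ (m + 2)) := by ring
    _ ≤ ((m : ℝ) + 1) * (m ^ m * 2 ^ 2) := by gcongr
    _ ≤ ((m : ℝ) + 2) ^ (m + 1) * (3 / 4) := by linarith

theorem hasDerivAt_max_zero_pow {m : ℕ} (hm : 2 ≤ m) (t : ℝ) :
    HasDerivAt (fun s : ℝ => max s 0 ^ m) (m * max t 0 ^ (m - 1)) t := by
  have hne : ∀ s ≠ 0, HasDerivAt (fun s : ℝ => max s 0 ^ m) (m * max s 0 ^ (m - 1)) s := by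
    intro s hs
    rcases hs.lt_or_gt with hs | hs
    · have hzero : (fun s : ℝ => max s 0 ^ m) =ᶠ[nhds s] fun _ => 0 := by
        filter_upwards [eventually_lt_nhds hs] with r hr
        rw [max_eq_right hr.le, zero_pow (by omega)]
      rw [max_eq_right hs.le, zero_pow (by omega), mul_zero]
      exact (hasDerivAt_const s 0).congr_of_eventuallyEq hzero
    · have hpow : (fun s : ℝ => max s 0 ^ m) =ᶠ[nhds s] fun r => r ^ m := by
        filter_upwards [eventually_gt_nhds hs] with r hr
        rw [max_eq_left hr.le]
      rw [max_eq_left hs.le]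
      exact (hasDerivAt_pow m s).congr_of_eventuallyEq hpow
  obtain rfl | ht := eq_or_ne t 0
  · exact hasDerivAt_of_hasDerivAt_of_ne hne (by fun_prop) (by fun_prop)
  · exact hne t ht

theorem measurable_setIntegral_Ioc_uncurry {G : ℝ → ℝ → ℝ} (hG : Measurable (Function.uncurry G))
    {l u : ℝ → ℝ} (hl : Measurable l) (hu : Measurable u) :
    Measurable fun y => ∫ z in Ioc (l y) (u y), G y z := by
  have hS : MeasurableSet {p : ℝ × ℝ | l p.1 < p.2 ∧ p.2 ≤ u p.1} :=
    (measurableSet_lt (hl.comp measurable_fst) measurable_snd).inter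
      (measurableSet_le measurable_snd (hu.comp measurable_fst))
  have hind : ∀ y, ∫ z in Ioc (l y) (u y), G y z
      = ∫ z, {p : ℝ × ℝ | l p.1 < p.2 ∧ p.2 ≤ u p.1}.indicator (Function.uncurry G) (y, z) := by
    intro y
    rw [← MeasureTheory.integral_indicator measurableSet_Ioc]
    rfl
  simp_rw [hind]
  exact ((hG.indicator hS).stronglyMeasurable.integral_prod_right').measurable

theorem measurable_intervalIntegral_uncurry {G : ℝ → ℝ → ℝ}
    (hG : Measurable (Function.uncurry G)) {l u : ℝ → ℝ} (hl : Measurable l) (hu : Measurable u) :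
    Measurable fun y => ∫ z in l y..u y, G y z :=
  (measurable_setIntegral_Ioc_uncurry hG hl hu).sub (measurable_setIntegral_Ioc_uncurry hG hu hl)

theorem integrableOn_of_abs_le {F : ℝ → ℝ} {s : Set ℝ} (hs : MeasurableSet s) (hs' : volume s < ⊤)
    (hF : Measurable F) {C : ℝ} (hC : ∀ z ∈ s, |F z| ≤ C) : IntegrableOn F s :=
  IntegrableOn.of_bound hs' hF.aestronglyMeasurable C ((ae_restrict_iff' hs).2 (ae_of_all _ hC))

section IteratedIntegral

variable {K : ℝ → ℝ → ℝ} {L F : ℝ → ℝ} {a b C : ℝ}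

theorem intervalIntegrable_kernel_mul (hK : Continuous (Function.uncurry K))
    (hF : IntegrableOn F (Icc 0 1)) {y : ℝ} (hy : L y ∈ Icc 0 1) :
    IntervalIntegrable (fun z => K y z * F z) volume 0 (L y) :=
  (hF.mono_set (uIcc_subset_Icc (left_mem_Icc.2 zero_le_one) hy)).intervalIntegrable
    |>.continuousOn_mul (hK.uncurry_left y).continuousOn

theorem intervalIntegrable_iteratedIntegral (hK : Continuous (Function.uncurry K))
    (hL : Continuous L) (hab : a ≤ b) (hL01 : MapsTo L (Icc a b) (Icc 0 1)) (hF : Measurable F)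
    (hC : ∀ z ∈ Icc 0 1, |F z| ≤ C) :
    IntervalIntegrable (fun y => ∫ z in 0..L y, K y z * F z) volume a b := by
  obtain ⟨D, hD⟩ := (isCompact_Icc.prod (isCompact_Icc (a := (0 : ℝ)) (b := 1)))
    |>.exists_bound_of_continuousOn (hK.continuousOn (s := Icc a b ×ˢ Icc 0 1))
  have hC0 : 0 ≤ C := (abs_nonneg _).trans (hC 0 (left_mem_Icc.2 zero_le_one))
  have hD0 : 0 ≤ D :=
    (norm_nonneg _).trans (hD (a, 0) ⟨left_mem_Icc.2 hab, left_mem_Icc.2 zero_le_one⟩)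
  have hmeas : Measurable fun y => ∫ z in 0..L y, K y z * F z :=
    measurable_intervalIntegral_uncurry (G := fun y z => K y z * F z)
      (hK.measurable.mul (hF.comp measurable_snd)) measurable_const hL.measurable
  rw [intervalIntegrable_iff_integrableOn_Icc_of_le hab]
  refine integrableOn_of_abs_le measurableSet_Icc measure_Icc_lt_top hmeas (C := D * C) ?_
  intro y hy
  have hLy := hL01 hy
  have hbound : ∀ z ∈ uIoc 0 (L y), ‖K y z * F z‖ ≤ D * C := by
    intro z hz
    have hz' : z ∈ Icc (0 : ℝ) 1 := uIcc_subset_Icc (left_mem_Icc.2 zero_le_one) hLy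
      (uIoc_subset_uIcc hz)
    rw [norm_mul]
    exact mul_le_mul (hD (y, z) ⟨hy, hz'⟩) (hC z hz') (norm_nonneg _) hD0
  calc |∫ z in 0..L y, K y z * F z| ≤ D * C * |L y - 0| := norm_integral_le_of_norm_le_const hbound
    _ ≤ D * C * 1 := mul_le_mul_of_nonneg_left
        (by rw [sub_zero, abs_of_nonneg hLy.1]; exact hLy.2) (mul_nonneg hD0 hC0)
    _ = D * C := mul_one _

theorem abs_iteratedIntegral_le (hK : Continuous (Function.uncurry K)) (hL : Continuous L)
    (hab : a ≤ b) (hK0 : ∀ y ∈ Icc a b, ∀ z ∈ Icc (0 : ℝ) 1, 0 ≤ K y z)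
    (hL01 : MapsTo L (Icc a b) (Icc 0 1)) (hF : Measurable F) (hC : ∀ z ∈ Icc 0 1, |F z| ≤ C) :
    |∫ y in a..b, ∫ z in 0..L y, K y z * F z| ≤ C * ∫ y in a..b, ∫ z in 0..L y, K y z := by
  have hFi : IntegrableOn F (Icc 0 1) :=
    integrableOn_of_abs_le measurableSet_Icc measure_Icc_lt_top hF hC
  have hinner : ∀ y ∈ Icc a b,
      |∫ z in 0..L y, K y z * F z| ≤ C * ∫ z in 0..L y, K y z := by
    intro y hy
    have hLy := hL01 hy
    calc |∫ z in 0..L y, K y z * F z| ≤ ∫ z in 0..L y, |K y z * F z| :=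
          abs_integral_le_integral_abs hLy.1
      _ ≤ ∫ z in 0..L y, C * K y z := by
          refine integral_mono_on hLy.1 (intervalIntegrable_kernel_mul hK hFi hLy).abs
            ((continuous_const.mul (hK.uncurry_left y)).intervalIntegrable _ _) fun z hz => ?_
          have hz' : z ∈ Icc (0 : ℝ) 1 := ⟨hz.1, hz.2.trans hLy.2⟩
          rw [abs_mul, abs_of_nonneg (hK0 y hy z hz'), mul_comm C]
          exact mul_le_mul_of_nonneg_left (hC z hz') (hK0 y hy z hz')
      _ = C * ∫ z in 0..L y, K y z := integral_const_mul C _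
  calc |∫ y in a..b, ∫ z in 0..L y, K y z * F z|
      ≤ ∫ y in a..b, |∫ z in 0..L y, K y z * F z| := abs_integral_le_integral_abs hab
    _ ≤ ∫ y in a..b, C * ∫ z in 0..L y, K y z :=
        integral_mono_on hab (intervalIntegrable_iteratedIntegral hK hL hab hL01 hF hC).abs
          ((continuous_const.mul
            (continuous_parametric_intervalIntegral_of_continuous hK hL)).intervalIntegrable _ _)
          hinner
    _ = C * ∫ y in a..b, ∫ z in 0..L y, K y z := integral_const_mul C _

theorem abs_sub_iteratedIntegral_le (hK : Continuous (Function.uncurry K)) (hL : Continuous L)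
    (hab : a ≤ b) (hK0 : ∀ y ∈ Icc a b, ∀ z ∈ Icc (0 : ℝ) 1, 0 ≤ K y z)
    (hL01 : MapsTo L (Icc a b) (Icc 0 1)) {F₁ F₂ : ℝ → ℝ} {C₁ C₂ M : ℝ}
    (hF₁ : Measurable F₁) (hF₂ : Measurable F₂) (hC₁ : ∀ z ∈ Icc 0 1, |F₁ z| ≤ C₁)
    (hC₂ : ∀ z ∈ Icc 0 1, |F₂ z| ≤ C₂) (hM : ∀ z ∈ Icc 0 1, |F₁ z - F₂ z| ≤ M) :
    |(∫ y in a..b, ∫ z in 0..L y, K y z * F₁ z) - ∫ y in a..b, ∫ z in 0..L y, K y z * F₂ z|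
      ≤ M * ∫ y in a..b, ∫ z in 0..L y, K y z := by
  have hsub : (∫ y in a..b, ∫ z in 0..L y, K y z * F₁ z) - ∫ y in a..b, ∫ z in 0..L y, K y z * F₂ z
      = ∫ y in a..b, ∫ z in 0..L y, K y z * (F₁ z - F₂ z) := by
    rw [← integral_sub (intervalIntegrable_iteratedIntegral hK hL hab hL01 hF₁ hC₁)
      (intervalIntegrable_iteratedIntegral hK hL hab hL01 hF₂ hC₂)]
    refine integral_congr fun y hy => ?_
    have hLy := hL01 (uIcc_of_le hab ▸ hy)
    simp only [mul_sub]
    exact (integral_sub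
      (intervalIntegrable_kernel_mul hK
        (integrableOn_of_abs_le measurableSet_Icc measure_Icc_lt_top hF₁ hC₁) hLy)
      (intervalIntegrable_kernel_mul hK
        (integrableOn_of_abs_le measurableSet_Icc measure_Icc_lt_top hF₂ hC₂) hLy)).symm
  rw [hsub]
  exact abs_iteratedIntegral_le hK hL hab hK0 hL01 (hF₁.sub hF₂) hM

end IteratedIntegral

theorem first_kernel_mass_le {n : ℕ} (hn : 3 ≤ n) {x : ℝ} (hx : x ∈ Icc (0 : ℝ) 1) :
    ∫ y in max (2 * x - 1) 0..x, ((1 + y) / 2 - x) * (2 * n * (n - 1) * y ^ (n - 2)) ≤ 3 / 8 := by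
  obtain ⟨m, rfl⟩ : ∃ m, n = m + 2 := ⟨n - 2, by omega⟩
  obtain ⟨hx0, hx1⟩ := hx
  rw [Nat.add_sub_cancel]
  push_cast
  rw [show (m : ℝ) + 2 - 1 = m + 1 by ring]
  rcases le_total x (1 / 2) with hx2 | hx2
  · have hderiv : ∀ y ∈ uIcc 0 x, HasDerivAt
        (fun y => (m + 2) * (1 - 2 * x) * y ^ (m + 1) + (m + 1) * y ^ (m + 2))
        (((1 + y) / 2 - x) * (2 * (m + 2) * (m + 1) * y ^ m)) y := fun y _ =>
      (((hasDerivAt_pow (m + 1) y).const_mul ((m + 2) * (1 - 2 * x))).add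
        ((hasDerivAt_pow (m + 2) y).const_mul (m + 1 : ℝ))).congr_deriv (by simp; ring)
    rw [max_eq_right (by linarith), integral_eq_sub_of_hasDerivAt hderiv
      ((Continuous.intervalIntegrable (by fun_prop)) _ _)]
    simp only [zero_pow (by omega : m + 1 ≠ 0), zero_pow (by omega : m + 2 ≠ 0), mul_zero,
      add_zero, sub_zero]
    linarith [mul_pow_mul_one_sub_two_mul_add_pow_le (m := m) (by omega) hx0 hx2]
  · have hcompare : ∫ y in 2 * x - 1..x, ((1 + y) / 2 - x) * (2 * (m + 2) * (m + 1) * y ^ m)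
        ≤ ∫ y in 2 * x - 1..x, ((1 + y) / 2 - x) * (2 * (m + 2) * (m + 1) * x ^ m) := by
      refine integral_mono_on (by linarith) ((Continuous.intervalIntegrable (by fun_prop)) _ _)
        ((Continuous.intervalIntegrable (by fun_prop)) _ _) fun y hy => ?_
      have hy0 : 0 ≤ y := by linarith [hy.1]
      have hL : 0 ≤ (1 + y) / 2 - x := by linarith [hy.1]
      gcongr
      exact hy.2
    have hexact : ∫ y in 2 * x - 1..x, ((1 + y) / 2 - x) * (2 * (m + 2) * (m + 1) * x ^ m)
        = (m + 2) * (m + 1) * x ^ m * (1 - x) ^ 2 / 2 := by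
      rw [integral_congr (g := fun y => (y - (2 * x - 1)) * ((m + 2) * (m + 1) * x ^ m))
        fun y _ => by ring, integral_comp_sub_right (fun v => v * ((m + 2) * (m + 1) * x ^ m))]
      simp
      ring
    rw [max_eq_left (by linarith)]
    linarith [mul_pow_mul_one_sub_sq_le (m := m) (by omega) hx2 hx1]

theorem integral_max_sub_two_mul_pow_le {n : ℕ} (hn : 3 ≤ n) (w l : ℝ) :
    ∫ z in (0 : ℝ)..l, 2 * (n : ℝ) * ((n : ℝ) - 1) * max (w - 2 * z) 0 ^ (n - 2)
      ≤ n * max w 0 ^ (n - 1) := by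
  obtain ⟨m, rfl⟩ : ∃ m, n = m + 2 := ⟨n - 2, by omega⟩
  rw [Nat.add_sub_cancel, show m + 2 - 1 = m + 1 by omega]
  push_cast
  have hderiv : ∀ z ∈ uIcc 0 l, HasDerivAt (fun z => -(m + 2) * max (w - 2 * z) 0 ^ (m + 1))
      (2 * (m + 2) * (m + 2 - 1) * max (w - 2 * z) 0 ^ m) z := fun z _ =>
    (((hasDerivAt_max_zero_pow (by omega : 2 ≤ m + 1) (w - 2 * z)).comp z
      (((hasDerivAt_id z).const_mul 2).const_sub w)).const_mul (-(m + 2 : ℝ))).congr_deriv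
      (by simp; ring)
  rw [integral_eq_sub_of_hasDerivAt hderiv ((Continuous.intervalIntegrable (by fun_prop)) _ _)]
  have : 0 ≤ (m + 2 : ℝ) * max (w - 2 * l) 0 ^ (m + 1) := by positivity
  simp only [mul_zero, sub_zero]
  linarith

theorem second_kernel_mass_le {n : ℕ} (hn : 3 ≤ n) {x : ℝ} (hx : x ∈ Icc (0 : ℝ) 1) :
    ∫ y in max (max (x - 1 / 4) 0) (2 * x - 1)..x,
      ∫ z in (0 : ℝ)..min (1 / 4 + y - x) ((1 + y) / 2 - x),
        2 * (n : ℝ) * ((n : ℝ) - 1) * max (3 * y - 2 * x - 2 * z) 0 ^ (n - 2) ≤ 1 / 3 := by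
  obtain ⟨hx0, hx1⟩ := hx
  have hab : max (max (x - 1 / 4) 0) (2 * x - 1) ≤ x := by
    simp only [max_le_iff]; refine ⟨⟨?_, ?_⟩, ?_⟩ <;> linarith
  have hderiv : ∀ y ∈ uIcc (max (max (x - 1 / 4) 0) (2 * x - 1)) x,
      HasDerivAt (fun y => max (3 * y - 2 * x) 0 ^ n / 3) (n * max (3 * y - 2 * x) 0 ^ (n - 1)) y :=
    fun y _ => by
      have h := ((hasDerivAt_max_zero_pow (m := n) (by omega) (3 * y - 2 * x)).comp y
        (((hasDerivAt_id' y).const_mul 3).sub_const (2 * x))).div_const 3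
      exact h.congr_deriv (by ring)
  calc _ ≤ ∫ y in max (max (x - 1 / 4) 0) (2 * x - 1)..x, n * max (3 * y - 2 * x) 0 ^ (n - 1) :=
        integral_mono_on hab ((Continuous.intervalIntegrable (by fun_prop)) _ _)
          ((Continuous.intervalIntegrable (by fun_prop)) _ _)
          fun _ _ => integral_max_sub_two_mul_pow_le hn _ _
    _ = x ^ n / 3 - max (3 * max (max (x - 1 / 4) 0) (2 * x - 1) - 2 * x) 0 ^ n / 3 := by
        rw [integral_eq_sub_of_hasDerivAt hderiv
            ((Continuous.intervalIntegrable (by fun_prop)) _ _),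
          show 3 * x - 2 * x = x by ring, max_eq_left hx0]
    _ ≤ 1 / 3 := by
        have : x ^ n ≤ 1 := pow_le_one₀ hx0 hx1
        have : 0 ≤ max (3 * max (max (x - 1 / 4) 0) (2 * x - 1) - 2 * x) 0 ^ n / 3 := by positivity
        linarith

theorem third_kernel_mass_le {n : ℕ} (hn : 3 ≤ n) {x : ℝ} (hx : x ∈ Icc (0 : ℝ) 1) :
    ∫ y in max (1 / 2) (2 * x - 1)..max (1 / 2) x,
      ∫ _ in (0 : ℝ)..(1 + y) / 2 - x, 4 * (n : ℝ) * ((n : ℝ) - 1) * (2 * y - 1) ^ (n - 2)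
      ≤ 3 / 16 := by
  obtain ⟨hx0, hx1⟩ := hx
  rcases le_total x (1 / 2) with hx2 | hx2
  · rw [max_eq_left (by linarith), max_eq_left hx2, integral_same]
    norm_num
  simp only [intervalIntegral.integral_const, smul_eq_mul, sub_zero]
  set f : ℝ → ℝ := fun s => ((1 + s) / 2 - (2 * x - 1)) * (2 * n * (n - 1) * s ^ (n - 2))
  rw [integral_congr (g := fun y => f (2 * y - 1)) fun y _ => by simp only [f]; ring,
    integral_comp_mul_sub f (by norm_num), max_eq_right hx2,
    show 2 * max (1 / 2) (2 * x - 1) - 1 = max (2 * (2 * x - 1) - 1) 0 by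
      rw [mul_max_of_nonneg _ _ (by norm_num : (0 : ℝ) ≤ 2), ← max_sub_sub_right, max_comm]
      norm_num]
  have := first_kernel_mass_le hn (x := 2 * x - 1) ⟨by linarith, by linarith⟩
  rw [smul_eq_mul]
  linarith

section Terms

variable {n : ℕ} {x M C₁ C₂ : ℝ} {F₁ F₂ : ℝ → ℝ}

theorem abs_sub_first_term_le (hn : 3 ≤ n) (hx : x ∈ Icc (0 : ℝ) 1) (hF₁ : Measurable F₁)
    (hF₂ : Measurable F₂) (hC₁ : ∀ z ∈ Icc 0 1, |F₁ z| ≤ C₁) (hC₂ : ∀ z ∈ Icc 0 1, |F₂ z| ≤ C₂)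
    (hM : ∀ z ∈ Icc 0 1, |F₁ z - F₂ z| ≤ M) :
    |(∫ y in max (2 * x - 1) 0..x, ∫ z in (0 : ℝ)..(1 + y) / 2 - x,
        2 * (n : ℝ) * ((n : ℝ) - 1) * y ^ (n - 2) * F₁ z)
      - ∫ y in max (2 * x - 1) 0..x, ∫ z in (0 : ℝ)..(1 + y) / 2 - x,
        2 * (n : ℝ) * ((n : ℝ) - 1) * y ^ (n - 2) * F₂ z| ≤ M * (3 / 8) := by
  obtain ⟨hx0, hx1⟩ := hx
  have hM0 : 0 ≤ M := (abs_nonneg _).trans (hM 0 (left_mem_Icc.2 zero_le_one))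
  have hn1 : (0 : ℝ) ≤ n - 1 := by
    have : (3 : ℝ) ≤ n := by exact_mod_cast hn
    linarith
  refine (abs_sub_iteratedIntegral_le (K := fun y _ => 2 * (n : ℝ) * ((n : ℝ) - 1) * y ^ (n - 2))
    (L := fun y => (1 + y) / 2 - x) (by fun_prop) (by fun_prop) (max_le (by linarith) hx0)
    ?_ ?_ hF₁ hF₂ hC₁ hC₂ hM).trans ?_
  · intro y hy _ _
    have hy0 : 0 ≤ y := (le_max_right _ _).trans hy.1
    exact mul_nonneg (mul_nonneg (by positivity) hn1) (pow_nonneg hy0 _)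
  · intro y hy
    have hy1 : 2 * x - 1 ≤ y := (le_max_left _ _).trans hy.1
    constructor <;> linarith [hy.2]
  · gcongr
    simp only [intervalIntegral.integral_const, smul_eq_mul, sub_zero]
    exact first_kernel_mass_le hn ⟨hx0, hx1⟩

theorem abs_sub_second_term_le (hn : 3 ≤ n) (hx : x ∈ Icc (0 : ℝ) 1) (hF₁ : Measurable F₁)
    (hF₂ : Measurable F₂) (hC₁ : ∀ z ∈ Icc 0 1, |F₁ z| ≤ C₁) (hC₂ : ∀ z ∈ Icc 0 1, |F₂ z| ≤ C₂)
    (hM : ∀ z ∈ Icc 0 1, |F₁ z - F₂ z| ≤ M) :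
    |(∫ y in max (max (x - 1 / 4) 0) (2 * x - 1)..x,
        ∫ z in (0 : ℝ)..min (1 / 4 + y - x) ((1 + y) / 2 - x),
          2 * (n : ℝ) * ((n : ℝ) - 1) * max (3 * y - 2 * x - 2 * z) 0 ^ (n - 2) * F₁ z)
      - ∫ y in max (max (x - 1 / 4) 0) (2 * x - 1)..x,
        ∫ z in (0 : ℝ)..min (1 / 4 + y - x) ((1 + y) / 2 - x),
          2 * (n : ℝ) * ((n : ℝ) - 1) * max (3 * y - 2 * x - 2 * z) 0 ^ (n - 2) * F₂ z|
      ≤ M * (1 / 3) := by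
  obtain ⟨hx0, hx1⟩ := hx
  have hM0 : 0 ≤ M := (abs_nonneg _).trans (hM 0 (left_mem_Icc.2 zero_le_one))
  have hn1 : (0 : ℝ) ≤ n - 1 := by
    have : (3 : ℝ) ≤ n := by exact_mod_cast hn
    linarith
  refine (abs_sub_iteratedIntegral_le
    (K := fun y z => 2 * (n : ℝ) * ((n : ℝ) - 1) * max (3 * y - 2 * x - 2 * z) 0 ^ (n - 2))
    (L := fun y => min (1 / 4 + y - x) ((1 + y) / 2 - x)) (by fun_prop) (by fun_prop)
    (max_le (max_le (by linarith) hx0) (by linarith)) ?_ ?_ hF₁ hF₂ hC₁ hC₂ hM).trans ?_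
  · intro y _ z _
    exact mul_nonneg (mul_nonneg (by positivity) hn1) (pow_nonneg (le_max_right _ _) _)
  · intro y hy
    have hy1 : x - 1 / 4 ≤ y := ((le_max_left _ _).trans (le_max_left _ _)).trans hy.1
    have hy2 : 2 * x - 1 ≤ y := (le_max_right _ _).trans hy.1
    exact ⟨le_min (by linarith) (by linarith), (min_le_left _ _).trans (by linarith [hy.2])⟩
  · gcongr
    exact second_kernel_mass_le hn ⟨hx0, hx1⟩

theorem abs_sub_third_term_le (hn : 3 ≤ n) (hx : x ∈ Icc (0 : ℝ) 1) (hF₁ : Measurable F₁)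
    (hF₂ : Measurable F₂) (hC₁ : ∀ z ∈ Icc 0 1, |F₁ z| ≤ C₁) (hC₂ : ∀ z ∈ Icc 0 1, |F₂ z| ≤ C₂)
    (hM : ∀ z ∈ Icc 0 1, |F₁ z - F₂ z| ≤ M) :
    |(∫ y in max (1 / 2) (2 * x - 1)..max (1 / 2) x, ∫ z in (0 : ℝ)..(1 + y) / 2 - x,
        4 * (n : ℝ) * ((n : ℝ) - 1) * (2 * y - 1) ^ (n - 2) * F₁ z)
      - ∫ y in max (1 / 2) (2 * x - 1)..max (1 / 2) x, ∫ z in (0 : ℝ)..(1 + y) / 2 - x,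
        4 * (n : ℝ) * ((n : ℝ) - 1) * (2 * y - 1) ^ (n - 2) * F₂ z| ≤ M * (3 / 16) := by
  obtain ⟨hx0, hx1⟩ := hx
  have hM0 : 0 ≤ M := (abs_nonneg _).trans (hM 0 (left_mem_Icc.2 zero_le_one))
  have hn1 : (0 : ℝ) ≤ n - 1 := by
    have : (3 : ℝ) ≤ n := by exact_mod_cast hn
    linarith
  refine (abs_sub_iteratedIntegral_le
    (K := fun y _ => 4 * (n : ℝ) * ((n : ℝ) - 1) * (2 * y - 1) ^ (n - 2))
    (L := fun y => (1 + y) / 2 - x) (by fun_prop) (by fun_prop)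
    (max_le_max le_rfl (by linarith)) ?_ ?_ hF₁ hF₂ hC₁ hC₂ hM).trans ?_
  · intro y hy _ _
    have hy0 : 0 ≤ 2 * y - 1 := by linarith [(le_max_left _ _).trans hy.1]
    exact mul_nonneg (mul_nonneg (by positivity) hn1) (pow_nonneg hy0 _)
  · intro y hy
    have hy1 : 2 * x - 1 ≤ y := (le_max_right _ _).trans hy.1
    have hy2 : y ≤ 1 := hy.2.trans (max_le (by norm_num) hx1)
    constructor <;> linarith
  · gcongr
    exact third_kernel_mass_le hn ⟨hx0, hx1⟩

end Terms

theorem abs_sub_le_sSup_image {F₁ F₂ : ℝ → ℝ} {s : Set ℝ} {C₁ C₂ : ℝ}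
    (hC₁ : ∀ z ∈ s, |F₁ z| ≤ C₁) (hC₂ : ∀ z ∈ s, |F₂ z| ≤ C₂) :
    ∀ z ∈ s, |F₁ z - F₂ z| ≤ sSup ((fun z => |F₁ z - F₂ z|) '' s) := by
  have hbdd : BddAbove ((fun z => |F₁ z - F₂ z|) '' s) := by
    refine ⟨C₁ + C₂, ?_⟩
    rintro _ ⟨z, hz, rfl⟩
    exact (abs_sub _ _).trans (add_le_add (hC₁ z hz) (hC₂ z hz))
  exact fun z hz => le_csSup hbdd (mem_image_of_mem _ hz)

theorem stmt_12_general (n : ℕ) (hn : 3 ≤ n)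
    (FA : ℝ → ℝ)
    (Ω : (ℝ → ℝ) → ℝ → ℝ)
    (hΩ : ∀ F : ℝ → ℝ, ∀ x : ℝ, Ω F x
      = FA x
        - (∫ y in (max (2*x - 1) 0)..x, ∫ z in (0:ℝ)..((1 + y)/2 - x),
            2 * (n:ℝ) * ((n:ℝ) - 1) * y ^ (n-2) * F z)
        - (∫ y in (max (max (x - 1/4) 0) (2*x - 1))..x,
            ∫ z in (0:ℝ)..(min (1/4 + y - x) ((1 + y)/2 - x)),
              2 * (n:ℝ) * ((n:ℝ) - 1) * (max (3*y - 2*x - 2*z) 0) ^ (n-2) * F z)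
        + (∫ y in (max (1/2 : ℝ) (2*x - 1))..(max (1/2 : ℝ) x),
            ∫ z in (0:ℝ)..((1 + y)/2 - x),
              4 * (n:ℝ) * ((n:ℝ) - 1) * (2*y - 1) ^ (n-2) * F z))
    (F₁ F₂ : ℝ → ℝ) (hm₁ : Measurable F₁) (hm₂ : Measurable F₂)
    (hb₁ : ∃ C : ℝ, ∀ x ∈ Icc (0:ℝ) 1, |F₁ x| ≤ C)
    (hb₂ : ∃ C : ℝ, ∀ x ∈ Icc (0:ℝ) 1, |F₂ x| ≤ C)
    (x : ℝ) (hx : x ∈ Icc (0:ℝ) 1) :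
    |Ω F₁ x - Ω F₂ x|
      ≤ (11/12 : ℝ) * sSup ((fun z => |F₁ z - F₂ z|) '' Icc (0:ℝ) 1) := by
  obtain ⟨C₁, hC₁⟩ := hb₁
  obtain ⟨C₂, hC₂⟩ := hb₂
  have hM := abs_sub_le_sSup_image hC₁ hC₂
  have hM0 := (abs_nonneg _).trans (hM 0 (left_mem_Icc.2 zero_le_one))
  have h₁ := abs_sub_first_term_le hn hx hm₁ hm₂ hC₁ hC₂ hM
  have h₂ := abs_sub_second_term_le hn hx hm₁ hm₂ hC₁ hC₂ hM
  have h₃ := abs_sub_third_term_le hn hx hm₁ hm₂ hC₁ hC₂ hM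
  rw [hΩ, hΩ]
  rw [abs_le] at h₁ h₂ h₃ ⊢
  constructor <;> linarith

theorem stmt_12 (n : ℕ) (hn : 3 ≤ n)
    (FA : ℝ → ℝ)
    (hFA : ∀ x : ℝ, FA x
      = 2 * x ^ n + (n:ℝ) * x ^ (n-1) * (1 - x)
        - (max (2*x - 1) 0) ^ n - (n:ℝ) * (max (2*x - 1) 0) ^ (n-1) * (1 - x))
    (Ω : (ℝ → ℝ) → ℝ → ℝ)
    (hΩ : ∀ F : ℝ → ℝ, ∀ x : ℝ, Ω F x
      = FA x
        - (∫ y in (max (2*x - 1) 0)..x, ∫ z in (0:ℝ)..((1 + y)/2 - x),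
            2 * (n:ℝ) * ((n:ℝ) - 1) * y ^ (n-2) * F z)
        - (∫ y in (max (max (x - 1/4) 0) (2*x - 1))..x,
            ∫ z in (0:ℝ)..(min (1/4 + y - x) ((1 + y)/2 - x)),
              2 * (n:ℝ) * ((n:ℝ) - 1) * (max (3*y - 2*x - 2*z) 0) ^ (n-2) * F z)
        + (∫ y in (max (1/2 : ℝ) (2*x - 1))..(max (1/2 : ℝ) x),
            ∫ z in (0:ℝ)..((1 + y)/2 - x),
              4 * (n:ℝ) * ((n:ℝ) - 1) * (2*y - 1) ^ (n-2) * F z))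
    (F₁ F₂ : ℝ → ℝ) (hm₁ : Measurable F₁) (hm₂ : Measurable F₂)
    (hb₁ : ∃ C : ℝ, ∀ x ∈ Icc (0:ℝ) 1, |F₁ x| ≤ C)
    (hb₂ : ∃ C : ℝ, ∀ x ∈ Icc (0:ℝ) 1, |F₂ x| ≤ C)
    (x : ℝ) (hx : x ∈ Icc (0:ℝ) 1) :
    |Ω F₁ x - Ω F₂ x|
      ≤ (11/12 : ℝ) * sSup ((fun z => |F₁ z - F₂ z|) '' Icc (0:ℝ) 1) :=
  stmt_12_general n hn FA Ω hΩ F₁ F₂ hm₁ hm₂ hb₁ hb₂ x hx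
end
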